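/- arXiv:1810.09966 — 7 statements merged into one kernel-verified Lean document; each statement's English description precedes it below -/
import Mathlib

section
/- Let S be a completely regular semigroup, ρ a stable quasiorder on S (stable also under inversion), and let s, t ∈ S be J-equivalent elements. Then s ρ t if and only if s⁰ ρ t⁰ and s·t⁻¹ ρ (s·t⁻¹)⁰. -/
/-!
The forward direction is multiplication: `s ρ t` gives `s·s⁻¹ ρ t·s⁻¹ ρ t·t⁻¹`, and with
`z = s·t⁻¹` it gives `z = z⁰·s·t⁻¹ ρ z⁰·t·t⁻¹ = z⁰`.

For the converse, `t⁻¹ ≤_J t ≤_J s` gives `t⁻¹ ≤_J s·t⁻¹ = z`, which stability upgrades to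
`t⁻¹ L z`, i.e. `t⁻¹ = c·z`; hence `t⁰·z⁰ = t⁰`.
Multiplying `s⁰ ρ t⁰` by `z⁰` on the right then yields `z⁰ ρ t⁰`, and
`s = s·s⁰ ρ s·t⁰ = z·t ρ z⁰·t ρ t⁰·t = t`.
-/

/-- `JBelow s t` : s lies in the two-sided ideal generated by t. -/
def JBelow {S : Type*} [Semigroup S] (s t : S) : Prop :=
  s = t ∨ (∃ a, s = a * t) ∨ (∃ b, s = t * b) ∨ (∃ a b, s = a * t * b)

/-- `JEquiv s t` : s and t generate the same two-sided ideal. -/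
def JEquiv {S : Type*} [Semigroup S] (s t : S) : Prop :=
  JBelow s t ∧ JBelow t s

section

variable {S : Type*} [Semigroup S]

namespace JBelow

theorem refl (a : S) : JBelow a a := Or.inl rfl

theorem mul_left (x : S) {b c : S} (h : JBelow b c) : JBelow (x * b) c := by
  obtain rfl | ⟨u, rfl⟩ | ⟨u, rfl⟩ | ⟨u, v, rfl⟩ := h
  · exact Or.inr (Or.inl ⟨x, rfl⟩)
  · exact Or.inr (Or.inl ⟨x * u, (mul_assoc x u c).symm⟩)
  · exact Or.inr (Or.inr (Or.inr ⟨x, u, (mul_assoc x c u).symm⟩))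
  · exact Or.inr (Or.inr (Or.inr ⟨x * u, v, by simp only [mul_assoc]⟩))

theorem mul_right (y : S) {b c : S} (h : JBelow b c) : JBelow (b * y) c := by
  obtain rfl | ⟨u, rfl⟩ | ⟨u, rfl⟩ | ⟨u, v, rfl⟩ := h
  · exact Or.inr (Or.inr (Or.inl ⟨y, rfl⟩))
  · exact Or.inr (Or.inr (Or.inr ⟨u, y, rfl⟩))
  · exact Or.inr (Or.inr (Or.inl ⟨u * y, mul_assoc c u y⟩))
  · exact Or.inr (Or.inr (Or.inr ⟨u, v * y, mul_assoc (u * c) v y⟩))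

theorem trans {a b c : S} (hab : JBelow a b) (hbc : JBelow b c) : JBelow a c := by
  obtain rfl | ⟨u, rfl⟩ | ⟨u, rfl⟩ | ⟨u, v, rfl⟩ := hab
  · exact hbc
  · exact hbc.mul_left u
  · exact hbc.mul_right u
  · exact (hbc.mul_left u).mul_right v

end JBelow

structure IsCompletelyRegular (inv : S → S) : Prop where
  mul_inv_mul : ∀ x, x * inv x * x = x
  inv_inv : ∀ x, inv (inv x) = x
  mul_inv_comm : ∀ x, x * inv x = inv x * x

namespace IsCompletelyRegular

variable {inv : S → S}

theorem inv_mul_inv (h : IsCompletelyRegular inv) (x : S) : inv x * x * inv x = inv x := by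
  simpa only [h.inv_inv] using h.mul_inv_mul (inv x)

theorem mul_mul_mul_inv (h : IsCompletelyRegular inv) (x : S) : x * (x * inv x) = x := by
  rw [h.mul_inv_comm, ← mul_assoc, h.mul_inv_mul]

theorem mul_inv_mul_mul (h : IsCompletelyRegular inv) (x y : S) :
    x * inv x * (x * y) = x * y := by
  rw [← mul_assoc, h.mul_inv_mul]

theorem inv_mul_mul_self (h : IsCompletelyRegular inv) (x : S) : inv x * (x * x) = x := by
  rw [← mul_assoc, ← h.mul_inv_comm, h.mul_inv_mul]

theorem mul_inv_mul_eq_of_mul_eq (h : IsCompletelyRegular inv) {z e : S} (hz : z * e = z) :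
    z * inv z * e = z * inv z := by
  rw [h.mul_inv_comm, mul_assoc, hz]

theorem jBelow_inv_self (h : IsCompletelyRegular inv) (x : S) : JBelow (inv x) x :=
  Or.inr (Or.inr (Or.inr ⟨inv x, inv x, (h.inv_mul_inv x).symm⟩))

theorem jBelow_mul_self (h : IsCompletelyRegular inv) (x : S) : JBelow x (x * x) :=
  Or.inr (Or.inl ⟨inv x, (h.inv_mul_mul_self x).symm⟩)

theorem jBelow_mul_comm (h : IsCompletelyRegular inv) (a b : S) : JBelow (a * b) (b * a) := by
  refine Or.inr (Or.inr (Or.inr ⟨inv (a * b) * a, b, ?_⟩))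
  simpa only [mul_assoc] using (h.inv_mul_mul_self (a * b)).symm

theorem exists_eq_mul_mul_of_jBelow (h : IsCompletelyRegular inv) {a b : S} (hab : JBelow a b) :
    ∃ u v, a = u * b * v := by
  obtain rfl | ⟨u, rfl⟩ | ⟨v, rfl⟩ | hab := hab
  · exact ⟨a * inv a, inv a * a, by rw [← mul_assoc, h.mul_inv_mul, h.mul_inv_mul]⟩
  · exact ⟨u, inv b * b, by rw [mul_assoc, ← mul_assoc b, h.mul_inv_mul]⟩
  · exact ⟨b * inv b, v, by rw [h.mul_inv_mul]⟩
  · exact hab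

theorem jBelow_mul_of_jBelow (h : IsCompletelyRegular inv) {x s : S} (hxs : JBelow x s) :
    JBelow x (s * x) := by
  obtain ⟨u, v, hx⟩ := h.exists_eq_mul_mul_of_jBelow hxs
  have hsq : x * x = x * u * s * v := by
    nth_rewrite 2 [hx]
    simp only [mul_assoc]
  have hxus : JBelow x (x * u * s) :=
    (hsq ▸ h.jBelow_mul_self x).trans ((JBelow.refl _).mul_right v)
  have hsxu : JBelow x (s * x * u) := by
    simpa only [mul_assoc] using hxus.trans (h.jBelow_mul_comm (x * u) s)
  exact hsxu.trans ((JBelow.refl _).mul_right u)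

/-- `x ≤_J y·x` forces `x L y·x`: the stability of completely regular semigroups. -/
theorem exists_eq_mul_of_jBelow_mul (h : IsCompletelyRegular inv) {x y : S}
    (hx : JBelow x (y * x)) : ∃ c, x = c * (y * x) := by
  obtain ⟨a, b, hab⟩ := h.exists_eq_mul_mul_of_jBelow hx
  set d := a * y
  have hdx : x = d * x * b := by
    conv_lhs => rw [hab]
    simp only [d, mul_assoc]
  have hidem : d * inv d * x = x := by
    rw [hdx]; simp only [← mul_assoc]; rw [h.mul_inv_mul]
  refine ⟨inv d * a, ?_⟩
  calc x = inv d * d * x := by rw [← h.mul_inv_comm, hidem]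
    _ = inv d * a * (y * x) := by simp only [d, mul_assoc]

theorem exists_inv_eq_mul_mul_inv_of_jBelow (h : IsCompletelyRegular inv) {s t : S}
    (hts : JBelow t s) : ∃ c, inv t = c * (s * inv t) :=
  h.exists_eq_mul_of_jBelow_mul (h.jBelow_mul_of_jBelow ((h.jBelow_inv_self t).trans hts))

section Compatible

variable {ρ : S → S → Prop} (hmul_left : ∀ a b c, ρ a b → ρ (c * a) (c * b))
  (hmul_right : ∀ a b c, ρ a b → ρ (a * c) (b * c))
include hmul_left hmul_right

theorem rel_mul_inv_self_of_rel (h : IsCompletelyRegular inv) {s t : S} (hst : ρ s t) :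
    ρ (s * inv t) (s * inv t * inv (s * inv t)) := by
  set z := s * inv t
  have hzt : z * (t * inv t) = z := by
    simp only [z, mul_assoc]; rw [← mul_assoc (inv t), h.inv_mul_inv]
  have hrel := hmul_right _ _ (inv t) (hmul_left _ _ (z * inv z) hst)
  rwa [mul_assoc _ s, mul_assoc _ t, h.mul_inv_mul, h.mul_inv_mul_eq_of_mul_eq hzt] at hrel

theorem rel_of_jBelow (h : IsCompletelyRegular inv) (htrans : ∀ a b c, ρ a b → ρ b c → ρ a c)
    {s t : S} (hts : JBelow t s) (htrace : ρ (s * inv s) (t * inv t))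
    (hker : ρ (s * inv t) (s * inv t * inv (s * inv t))) : ρ s t := by
  set z := s * inv t with hz
  obtain ⟨c, hc⟩ := h.exists_inv_eq_mul_mul_inv_of_jBelow hts
  have hte : t * inv t * (z * inv z) = t * inv t := by
    rw [mul_assoc, hc, mul_assoc c, h.mul_mul_mul_inv]
  have hse : s * inv s * (z * inv z) = z * inv z := by
    rw [← mul_assoc, hz, h.mul_inv_mul_mul]
  have hzt : ρ (z * inv z) (t * inv t) := by
    simpa only [hse, hte] using hmul_right _ _ (z * inv z) htrace
  have hs : ρ s (z * t) := by
    have hrel := hmul_left _ _ s htrace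
    rwa [h.mul_mul_mul_inv, h.mul_inv_comm t, ← mul_assoc] at hrel
  have ht : ρ (z * inv z * t) t := by
    simpa only [h.mul_inv_mul] using hmul_right _ _ t hzt
  exact htrans _ _ _ hs (htrans _ _ _ (hmul_right _ _ t hker) ht)

end Compatible

end IsCompletelyRegular

end

theorem trace_kernel_characterization_right_general
    {S : Type*} [Semigroup S] (inv : S → S)
    (hinv1 : ∀ x, x * inv x * x = x)
    (hinv2 : ∀ x, inv (inv x) = x)
    (hinv3 : ∀ x, x * inv x = inv x * x)
    (ρ : S → S → Prop)
    (htrans : ∀ a b c, ρ a b → ρ b c → ρ a c)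
    (hmul_left : ∀ a b c, ρ a b → ρ (c * a) (c * b))
    (hmul_right : ∀ a b c, ρ a b → ρ (a * c) (b * c))
    (hinv_stable : ∀ a b, ρ a b → ρ (inv a) (inv b))
    (s t : S) (hJ : JEquiv s t) :
    ρ s t ↔ (ρ (s * inv s) (t * inv t) ∧
      ρ (s * inv t) ((s * inv t) * inv (s * inv t))) := by
  have h : IsCompletelyRegular inv := ⟨hinv1, hinv2, hinv3⟩
  refine ⟨fun hst => ⟨?_, ?_⟩, fun ⟨htrace, hker⟩ => ?_⟩
  · exact htrans _ _ _ (hmul_right _ _ (inv s) hst) (hmul_left _ _ t (hinv_stable _ _ hst))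
  · exact h.rel_mul_inv_self_of_rel hmul_left hmul_right hst
  · exact h.rel_of_jBelow hmul_left hmul_right htrans hJ.2 htrace hker

/-- For a stable quasiorder ρ on a completely regular semigroup and J-equivalent
elements s, t: s ρ t iff s⁰ ρ t⁰ and st⁻¹ ρ (st⁻¹)⁰, where a⁰ = a·a⁻¹. -/
theorem trace_kernel_characterization_right
    {S : Type*} [Semigroup S] (inv : S → S)
    (hinv1 : ∀ x, x * inv x * x = x)
    (hinv2 : ∀ x, inv (inv x) = x)
    (hinv3 : ∀ x, x * inv x = inv x * x)
    (ρ : S → S → Prop)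
    (hrefl : ∀ a, ρ a a)
    (htrans : ∀ a b c, ρ a b → ρ b c → ρ a c)
    (hmul_left : ∀ a b c, ρ a b → ρ (c * a) (c * b))
    (hmul_right : ∀ a b c, ρ a b → ρ (a * c) (b * c))
    (hinv_stable : ∀ a b, ρ a b → ρ (inv a) (inv b))
    (s t : S) (hJ : JEquiv s t) :
    ρ s t ↔ (ρ (s * inv s) (t * inv t) ∧
      ρ (s * inv t) ((s * inv t) * inv (s * inv t))) :=
  trace_kernel_characterization_right_general inv hinv1 hinv2 hinv3 ρ htrans hmul_left hmul_right
    hinv_stable s t hJ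
end

section
/- Every finite normal orthogroup satisfies the identity (xy)^ω = x^ω y^ω, where a^ω denotes the unique idempotent power of a. -/
/-!
Write e = x^ω, f = y^ω and g = (xy)^ω. Since x and y lie in groups, eg = g = gf and fge = fe;
normality of the band of idempotents turns these into g(ef) = ef = (ef)g, so the idempotent ef
(orthodoxy) lies below g in the natural order. But g = x(ef)(yz) with z the inverse of xy in its
group, and an idempotent v = a u b lying above an idempotent u equals it: v = (au)^k v (ub)^k for
all k, and the idempotent power of ub absorbs v on the right and u on the left.
-/

/-- `spow a n` is the power `a^(n+1)` in a semigroup. -/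
def spow {S : Type*} [Semigroup S] (a : S) : ℕ → S
  | 0 => a
  | n + 1 => spow a n * a

section Spow

variable {S : Type*} [Semigroup S]

theorem spow_mul_comm' (a : S) (n : ℕ) : spow a n * a = a * spow a n := by
  induction n with
  | zero => rfl
  | succ n ih => rw [spow, ih, mul_assoc, ih]

theorem spow_succ' (a : S) (n : ℕ) : spow a (n + 1) = a * spow a n :=
  spow_mul_comm' a n

theorem spow_add (a : S) (m n : ℕ) : spow a (m + n + 1) = spow a m * spow a n := by
  induction n with
  | zero => rfl
  | succ n ih => rw [← add_assoc, spow, ih, spow, mul_assoc]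

theorem spow_spow (a : S) (m k : ℕ) : spow (spow a m) k = spow a (m * k + m + k) := by
  induction k with
  | zero => rw [mul_zero, zero_add, add_zero]; rfl
  | succ k ih =>
    rw [spow, ih, ← spow_add]
    congr 1
    ring

theorem IsIdempotentElem.spow_eq {e : S} (he : IsIdempotentElem e) (n : ℕ) : spow e n = e := by
  induction n with
  | zero => rfl
  | succ n ih => rw [spow, ih, he.eq]

theorem IsIdempotentElem.spow_mul_add_add {a : S} {m : ℕ} (h : IsIdempotentElem (spow a m))
    (k : ℕ) : spow a (m * k + m + k) = spow a m := by
  rw [← spow_spow, h.spow_eq]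

theorem mul_spow_mul (a b : S) (n : ℕ) : spow (a * b) n * a = a * spow (b * a) n := by
  induction n with
  | zero => exact mul_assoc a b a
  | succ n ih => simp only [spow, ← mul_assoc, ih]

theorem mul_spow_eq_of_mul_eq {e a : S} (h : e * a = a) (n : ℕ) : e * spow a n = spow a n := by
  induction n with
  | zero => exact h
  | succ n ih => rw [spow, ← mul_assoc, ih]

theorem spow_mul_eq_of_mul_eq {a f : S} (h : a * f = a) (n : ℕ) : spow a n * f = spow a n := by
  induction n with
  | zero => exact h
  | succ n ih => rw [spow, mul_assoc, h]

theorem eq_spow_mul_mul_spow {v p q : S} (h : v = p * v * q) (k : ℕ) :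
    v = spow p k * v * spow q k := by
  induction k with
  | zero => exact h
  | succ k ih =>
    conv_lhs => rw [ih, h]
    rw [spow, spow_succ']
    simp only [mul_assoc]

theorem IsIdempotentElem.eq_of_le_of_eq_mul_mul {u v a b : S} (hu : IsIdempotentElem u)
    (huv : u * v = u) (hvu : v * u = u) (hv : v = a * u * b) {n : ℕ}
    (hn : IsIdempotentElem (spow (u * b) n)) : u = v := by
  set q := spow (u * b) n
  have hv' : v = spow (a * u) n * v * q := by
    refine eq_spow_mul_mul_spow ?_ n
    calc v = a * (u * v * u) * b := by rw [huv, hu.eq, hv]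
      _ = a * u * v * (u * b) := by simp only [mul_assoc]
  have hvq : v * q = v := by rw [hv', mul_assoc _ q q, hn.eq]
  have huq : u * q = q := mul_spow_eq_of_mul_eq (by rw [← mul_assoc, hu.eq]) n
  have hvq' : v = q := by rw [← hvq, ← huq, ← mul_assoc, hvu, huq]
  rw [← huv, hvq', huq]

end Spow

section Omega

variable {S : Type*} [Semigroup S] {ω : S → S}

theorem mul_omega_mul (hpow : ∀ a : S, ∃ n : ℕ, ω a = spow a n)
    (hidem : ∀ a : S, IsIdempotentElem (ω a)) (a b : S) : ω (a * b) * a = a * ω (b * a) := by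
  obtain ⟨m, hm⟩ := hpow (a * b)
  obtain ⟨k, hk⟩ := hpow (b * a)
  have hab := (hm ▸ hidem (a * b)).spow_mul_add_add k
  have hba := (hk ▸ hidem (b * a)).spow_mul_add_add m
  rw [hm, hk, ← hab, ← hba, mul_comm k m, add_right_comm, mul_spow_mul]

theorem mul_omega_eq_of_mul_eq (hpow : ∀ a : S, ∃ n : ℕ, ω a = spow a n) {e a : S}
    (h : e * a = a) : e * ω a = ω a := by
  obtain ⟨n, hn⟩ := hpow a
  rw [hn, mul_spow_eq_of_mul_eq h]

theorem omega_mul_eq_of_mul_eq (hpow : ∀ a : S, ∃ n : ℕ, ω a = spow a n) {a f : S}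
    (h : a * f = a) : ω a * f = ω a := by
  obtain ⟨n, hn⟩ := hpow a
  rw [hn, spow_mul_eq_of_mul_eq h]

theorem exists_mul_eq_omega (hpow : ∀ a : S, ∃ n : ℕ, ω a = spow a n)
    (hcr_left : ∀ a : S, ω a * a = a) (a : S) : ∃ b, a * b = ω a ∧ b * a = ω a := by
  obtain ⟨n, hn⟩ := hpow a
  cases n with
  | zero =>
    have ha : a * a = a := by simpa only [hn, spow] using hcr_left a
    exact ⟨a, by rw [ha, hn, spow], by rw [ha, hn, spow]⟩
  | succ n => exact ⟨spow a n, by rw [hn, spow_succ'], by rw [hn, spow]⟩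

theorem omega_mul_omega_mul_omega (hpow : ∀ a : S, ∃ n : ℕ, ω a = spow a n)
    (hidem : ∀ a : S, IsIdempotentElem (ω a)) (hcr_left : ∀ a : S, ω a * a = a)
    (a b : S) : ω b * ω (a * b) * ω a = ω b * ω a := by
  obtain ⟨a', ha', -⟩ := exists_mul_eq_omega hpow hcr_left a
  obtain ⟨b', -, hb'⟩ := exists_mul_eq_omega hpow hcr_left b
  calc ω b * ω (a * b) * ω a = b' * (b * ω (a * b)) * (a * a') := by
        rw [ha', ← hb']; simp only [mul_assoc]
    _ = b' * (ω (b * a) * (b * a)) * a' := by rw [← mul_omega_mul hpow hidem]; simp only [mul_assoc]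
    _ = ω b * ω a := by rw [hcr_left, ← hb', ← ha']; simp only [mul_assoc]

end Omega

section Normal

variable {S : Type*} [Semigroup S]

theorem mul_mul_eq_of_normal (hnormal : ∀ e f g : S, IsIdempotentElem e → IsIdempotentElem f →
      IsIdempotentElem g → e * f * e * g * e = e * g * e * f * e)
    {e f g : S} (he : IsIdempotentElem e) (hf : IsIdempotentElem f) (hg : IsIdempotentElem g)
    (heg : e * g = g) (hfge : f * g * e = f * e) (hef : IsIdempotentElem (e * f)) :
    g * (e * f) = e * f := by
  have hge : IsIdempotentElem (g * e) := by
    rw [IsIdempotentElem, mul_assoc, ← mul_assoc e, heg, ← mul_assoc, hg.eq]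
  have key : g * e * f * e = e * f * e :=
    calc g * e * f * e = e * g * (e * e) * f * e := by rw [heg, he.eq]
      _ = e * (g * e) * e * f * e := by simp only [mul_assoc]
      _ = e * f * e * (g * e) * e := hnormal e (g * e) f he hge hf
      _ = e * (f * (e * g) * (e * e)) := by simp only [mul_assoc]
      _ = e * f * e := by rw [heg, he.eq, hfge, mul_assoc]
  calc g * (e * f) = g * e * f * e * f := by rw [← hef.eq]; simp only [mul_assoc]
    _ = (e * f) * (e * f) := by rw [key]; simp only [mul_assoc]
    _ = e * f := hef.eq

theorem mul_mul_eq_of_normal' (hnormal : ∀ e f g : S, IsIdempotentElem e → IsIdempotentElem f →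
      IsIdempotentElem g → e * f * e * g * e = e * g * e * f * e)
    {e f g : S} (he : IsIdempotentElem e) (hf : IsIdempotentElem f) (hg : IsIdempotentElem g)
    (hgf : g * f = g) (hfge : f * g * e = f * e) (hef : IsIdempotentElem (e * f)) :
    e * f * g = e * f := by
  open MulOpposite in
  have := mul_mul_eq_of_normal (S := Sᵐᵒᵖ) (e := op f) (f := op e) (g := op g)
    (fun e f g he hf hg => unop_injective <| by
      simpa only [unop_mul, mul_assoc] using (hnormal e.unop f.unop g.unop
        (congrArg unop he) (congrArg unop hf) (congrArg unop hg)).symm)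
    (congrArg op hf) (congrArg op he) (congrArg op hg) (congrArg op hgf)
    (by simpa only [← op_mul, mul_assoc] using congrArg op hfge) (congrArg op hef)
  exact op_injective this

end Normal

theorem normal_orthogroup_omega_mul_general
    {S : Type*} [Semigroup S] (ω : S → S)
    (hpow : ∀ a : S, ∃ n : ℕ, ω a = spow a n)
    (hidem : ∀ a : S, ω a * ω a = ω a)
    (hcr_left : ∀ a : S, ω a * a = a)
    (hcr_right : ∀ a : S, a * ω a = a)
    (horthodox : ∀ e f : S, e * e = e → f * f = f → (e * f) * (e * f) = e * f)
    (hnormal : ∀ e f g : S, e * e = e → f * f = f → g * g = g →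
      e * f * e * g * e = e * g * e * f * e) :
    ∀ x y : S, ω (x * y) = ω x * ω y := by
  intro x y
  have heg : ω x * ω (x * y) = ω (x * y) :=
    mul_omega_eq_of_mul_eq hpow (by rw [← mul_assoc, hcr_left])
  have hgf : ω (x * y) * ω y = ω (x * y) :=
    omega_mul_eq_of_mul_eq hpow (by rw [mul_assoc, hcr_right])
  have hfge := omega_mul_omega_mul_omega hpow hidem hcr_left x y
  have hef : IsIdempotentElem (ω x * ω y) := horthodox _ _ (hidem x) (hidem y)
  obtain ⟨z, hz, -⟩ := exists_mul_eq_omega hpow hcr_left (x * y)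
  obtain ⟨n, hn⟩ := hpow (ω x * ω y * (y * z))
  refine (hef.eq_of_le_of_eq_mul_mul (a := x) (b := y * z) ?_ ?_ ?_ (hn ▸ hidem _)).symm
  · exact mul_mul_eq_of_normal' hnormal (hidem x) (hidem y) (hidem _) hgf hfge hef
  · exact mul_mul_eq_of_normal hnormal (hidem x) (hidem y) (hidem _) heg hfge hef
  · calc ω (x * y) = x * ω x * (ω y * y) * z := by rw [hcr_right, hcr_left, hz]
      _ = x * (ω x * ω y) * (y * z) := by simp only [mul_assoc]

/-- Every finite normal orthogroup satisfies (xy)^ω = x^ω y^ω, where a^ω denotes the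
unique idempotent power of a. -/
theorem normal_orthogroup_omega_mul
    {S : Type*} [Semigroup S] [Fintype S] (ω : S → S)
    (hpow : ∀ a : S, ∃ n : ℕ, ω a = spow a n)
    (hidem : ∀ a : S, ω a * ω a = ω a)
    (hcr_left : ∀ a : S, ω a * a = a)
    (hcr_right : ∀ a : S, a * ω a = a)
    (horthodox : ∀ e f : S, e * e = e → f * f = f → (e * f) * (e * f) = e * f)
    (hnormal : ∀ e f g : S, e * e = e → f * f = f → g * g = g →
      e * f * e * g * e = e * g * e * f * e) :
    ∀ x y : S, ω (x * y) = ω x * ω y :=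
  normal_orthogroup_omega_mul_general ω hpow hidem hcr_left hcr_right horthodox hnormal
end

section
/- Every finite normal orthogroup satisfies the identity x^ω y x^ω z x^ω = x^ω y z x^ω. -/
/-- If `a * f = a`, then every positive power of `a` absorbs `f` on the right. -/
lemma spow_absorb_right {S : Type*} [Semigroup S] {a f : S} (hf : a * f = a) :
    ∀ n, spow a n * f = spow a n
  | 0 => hf
  | n + 1 => by rw [spow, mul_assoc, hf]

/-- If `f * a = a`, then every positive power of `a` absorbs `f` on the left. -/
lemma spow_absorb_left {S : Type*} [Semigroup S] {a f : S} (hf : f * a = a) :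
    ∀ n, f * spow a n = spow a n
  | 0 => hf
  | n + 1 => by rw [spow, ← mul_assoc, spow_absorb_left hf n]

/-- Key band lemma: if `e, h, k` are idempotents with `e*h = h` and `k*e = k`,
then `h*e*k = h*k`, in any semigroup whose idempotents are closed under
multiplication and satisfy the sandwich-normality identity. -/
lemma key_band_lemma {S : Type*} [Semigroup S]
    (horthodox : ∀ e f : S, e * e = e → f * f = f → (e * f) * (e * f) = e * f)
    (hnormal : ∀ e f g : S, e * e = e → f * f = f → g * g = g →
      e * f * e * g * e = e * g * e * f * e)
    {e h k : S} (hh : h * h = h) (hk : k * k = k)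
    (eh : e * h = h) (ke : k * e = k) : h * e * k = h * k := by
  have hhe : (h * e) * (h * e) = h * e := by
    calc (h * e) * (h * e) = h * (e * h) * e := by simp only [mul_assoc]
      _ = h * e := by rw [eh, hh]
  have hek_ : (e * k) * (e * k) = e * k := by
    calc (e * k) * (e * k) = e * (k * e) * k := by simp only [mul_assoc]
      _ = e * k := by rw [ke, mul_assoc, hk]
  have heh : h * e * h = h := by rw [mul_assoc, eh, hh]
  have hehi : (h * e * h) * (h * e * h) = h * e * h := by rw [heh]; exact hh
  have hkh : (k * h) * (k * h) = k * h := horthodox k h hk hh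
  have hhk : (h * k) * (h * k) = h * k := horthodox h k hh hk
  have hhek : ((h * e) * k) * ((h * e) * k) = (h * e) * k := horthodox (h * e) k hhe hk
  have hkhe : (k * (h * e)) * (k * (h * e)) = k * (h * e) := horthodox k (h * e) hk hhe
  have hhkhe : ((h * k) * (h * e)) * ((h * k) * (h * e)) = (h * k) * (h * e) :=
    horthodox (h * k) (h * e) hhk hhe
  have P1 : h * (e * k) * h * k * h = h * k * h * (e * k) * h := hnormal h (e * k) k hh hek_ hk
  have P2 : k * (h * e * h) * k * (h * e) * k = k * (h * e) * k * (h * e * h) * k :=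
    hnormal k (h * e * h) (h * e) hk hehi hhe
  calc h * e * k
      = ((h * e) * k) * ((h * e) * k) := by rw [hhek]
    _ = (h * e) * ((k * h) * (k * h)) * (e * k) := by rw [hkh]; simp only [mul_assoc]
    _ = (h * (e * k) * h * k * h) * (e * k) := by simp only [mul_assoc]
    _ = (h * k * h * (e * k) * h) * (e * k) := by rw [P1]
    _ = h * ((k * (h * e)) * (k * (h * e))) * k := by simp only [mul_assoc]
    _ = h * (k * (h * e)) * k := by rw [hkhe]
    _ = (((h * k) * (h * e)) * ((h * k) * (h * e))) * k := by rw [hhkhe]; simp only [mul_assoc]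
    _ = h * (k * (h * e * h) * k * (h * e) * k) := by simp only [mul_assoc]
    _ = h * (k * (h * e) * k * (h * e * h) * k) := by rw [P2]
    _ = h * ((k * (h * e)) * (k * (h * e))) * (h * k) := by simp only [mul_assoc]
    _ = h * (k * (h * e)) * (h * k) := by rw [hkhe]
    _ = (h * k) * ((h * e) * h) * k := by simp only [mul_assoc]
    _ = (h * k) * (h * k) := by rw [heh]; simp only [mul_assoc]
    _ = h * k := hhk

/-- Abstract form of the main computation. -/
lemma main_aux {S : Type*} [Semigroup S]
    (horthodox : ∀ e f : S, e * e = e → f * f = f → (e * f) * (e * f) = e * f)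
    (hnormal : ∀ e f g : S, e * e = e → f * f = f → g * g = g →
      e * f * e * g * e = e * g * e * f * e)
    (e f g h k y z : S)
    (hh : h * h = h) (hk : k * k = k)
    (eyh : (e * y) * h = e * y) (kze : k * (z * e) = z * e)
    (eh : e * h = h) (ke : k * e = k) (hf : h * f = h) (gk : g * k = k)
    (yf : y * f = y) (gz : g * z = z) :
    e * y * e * z * e = e * y * z * e := by
  have hek : h * e * k = h * k := key_band_lemma horthodox hnormal hh hk eh ke
  have eyf : (e * y) * f = e * y := by rw [mul_assoc, yf]
  have gze : g * (z * e) = z * e := by rw [← mul_assoc, gz]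
  calc e * y * e * z * e
      = (e * y) * e * (z * e) := by simp only [mul_assoc]
    _ = ((e * y) * h) * e * (k * (z * e)) := by rw [eyh, kze]
    _ = (e * y) * (h * e * k) * (z * e) := by simp only [mul_assoc]
    _ = (e * y) * (h * k) * (z * e) := by rw [hek]
    _ = (e * y) * ((h * f) * (g * k)) * (z * e) := by rw [hf, gk]
    _ = ((e * y) * h) * (f * (g * (k * (z * e)))) := by simp only [mul_assoc]
    _ = (e * y) * (f * (g * (z * e))) := by rw [eyh, kze]
    _ = ((e * y) * f) * (g * (z * e)) := by simp only [mul_assoc]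
    _ = (e * y) * (z * e) := by rw [eyf, gze]
    _ = e * y * z * e := by simp only [mul_assoc]

/-- Every finite normal orthogroup satisfies x^ω y x^ω z x^ω = x^ω y z x^ω, where a^ω denotes the
unique idempotent power of a. -/
theorem normal_orthogroup_sandwich
    {S : Type*} [Semigroup S] [Fintype S] (ω : S → S)
    (hpow : ∀ a : S, ∃ n : ℕ, ω a = spow a n)
    (hidem : ∀ a : S, ω a * ω a = ω a)
    (hcr_left : ∀ a : S, ω a * a = a)
    (hcr_right : ∀ a : S, a * ω a = a)
    (horthodox : ∀ e f : S, e * e = e → f * f = f → (e * f) * (e * f) = e * f)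
    (hnormal : ∀ e f g : S, e * e = e → f * f = f → g * g = g →
      e * f * e * g * e = e * g * e * f * e) :
    ∀ x y z : S, ω x * y * ω x * z * ω x = ω x * y * z * ω x := by
  intro x y z
  have hee : ω x * ω x = ω x := hidem x
  obtain ⟨n, hn⟩ := hpow (ω x * y)
  obtain ⟨m, hm⟩ := hpow (z * ω x)
  refine main_aux horthodox hnormal (ω x) (ω y) (ω z) (ω (ω x * y)) (ω (z * ω x)) y z
    (hidem _) (hidem _) (hcr_right _) (hcr_left _) ?_ ?_ ?_ ?_ (hcr_right y) (hcr_left z)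
  · rw [hn]; exact spow_absorb_left (by rw [← mul_assoc, hee]) n
  · rw [hm]; exact spow_absorb_right (by rw [mul_assoc, hee]) m
  · rw [hn]; exact spow_absorb_right (by rw [mul_assoc, hcr_right y]) n
  · rw [hm]; exact spow_absorb_left (by rw [← mul_assoc, hcr_left z]) m
end

section
/- Let S be a finite ordered normal orthogroup and β : S → T a surjective homomorphism of ordered semigroups onto an ordered band T. Then β factors through the homomorphism φ : S → E(S), a ↦ a^ω; concretely, β(s) = β(s^ω) for all s ∈ S. -/
theorem map_spow {S T : Type*} [Semigroup S] [Semigroup T] (f : S → T)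
    (hf : ∀ x y : S, f (x * y) = f x * f y) (a : S) (n : ℕ) :
    f (spow a n) = spow (f a) n := by
  induction n with
  | zero => rfl
  | succ n ih => rw [spow, spow, hf, ih]

theorem spow_eq_self_of_isIdempotentElem {S : Type*} [Semigroup S] {a : S}
    (ha : IsIdempotentElem a) (n : ℕ) : spow a n = a := by
  induction n with
  | zero => rfl
  | succ n ih => rw [spow, ih, ha.eq]

theorem ordered_normal_orthogroup_band_quotient_factors_general
    {S : Type*} [Semigroup S]
    (ω : S → S)
    (hpow : ∀ a : S, ∃ n : ℕ, ω a = spow a n)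
    {T : Type*} [Semigroup T]
    (hTband : ∀ t : T, t * t = t)
    (β : S → T)
    (hβmul : ∀ s t : S, β (s * t) = β s * β t) :
    ∀ s : S, β s = β (ω s) := by
  intro s
  obtain ⟨n, hn⟩ := hpow s
  rw [hn, map_spow β hβmul, spow_eq_self_of_isIdempotentElem (hTband (β s))]

/-- A surjective ordered-semigroup homomorphism from a finite ordered normal orthogroup
onto an ordered band factors through a ↦ a^ω: β(s) = β(s^ω) for all s. -/
theorem ordered_normal_orthogroup_band_quotient_factors
    {S : Type*} [Semigroup S] [Fintype S] [PartialOrder S]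
    (hSle_left : ∀ a b c : S, a ≤ b → c * a ≤ c * b)
    (hSle_right : ∀ a b c : S, a ≤ b → a * c ≤ b * c)
    (ω : S → S)
    (hpow : ∀ a : S, ∃ n : ℕ, ω a = spow a n)
    (hidem : ∀ a : S, ω a * ω a = ω a)
    (hcr_left : ∀ a : S, ω a * a = a)
    (hcr_right : ∀ a : S, a * ω a = a)
    (horthodox : ∀ e f : S, e * e = e → f * f = f → (e * f) * (e * f) = e * f)
    (hnormal : ∀ e f g : S, e * e = e → f * f = f → g * g = g →
      e * f * e * g * e = e * g * e * f * e)
    {T : Type*} [Semigroup T] [PartialOrder T]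
    (hTband : ∀ t : T, t * t = t)
    (hTle_left : ∀ a b c : T, a ≤ b → c * a ≤ c * b)
    (hTle_right : ∀ a b c : T, a ≤ b → a * c ≤ b * c)
    (β : S → T)
    (hβmul : ∀ s t : S, β (s * t) = β s * β t)
    (hβmono : ∀ s t : S, s ≤ t → β s ≤ β t)
    (hβsurj : Function.Surjective β) :
    ∀ s : S, β s = β (ω s) :=
  ordered_normal_orthogroup_band_quotient_factors_general ω hpow hTband β hβmul
end

section
/- Let S be a finite normal orthogroup whose idempotents form a rectangular band (i.e., S satisfies x^ω = x^ω y^ω x^ω), let e be an idempotent of S, and let H_e be the maximal subgroup at e. Then the map ψ : S → H_e given by ψ(s) = ese is a semigroup homomorphism, and the map α : S → E(S) × H_e given by α(s) = (s^ω, ese) is an injective homomorphism. -/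
section

variable {S : Type*} [Semigroup S]

theorem spow_of_isIdempotentElem {f : S} (hf : IsIdempotentElem f) (n : ℕ) : spow f n = f := by
  induction n with
  | zero => rfl
  | succ n ih => rw [spow, ih, hf.eq]

theorem mul_spow_of_mul_eq {u a : S} (h : u * a = a) (n : ℕ) : u * spow a n = spow a n := by
  induction n with
  | zero => exact h
  | succ n ih => rw [spow, ← mul_assoc, ih]

theorem spow_mul_of_mul_eq {u a : S} (h : a * u = a) (n : ℕ) : spow a n * u = spow a n := by
  induction n with
  | zero => exact h
  | succ n ih => rw [spow, mul_assoc, h]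

variable {ω : S → S}

theorem omega_eq_self (hpow : ∀ a : S, ∃ n : ℕ, ω a = spow a n)
    {f : S} (hf : IsIdempotentElem f) : ω f = f := by
  obtain ⟨n, hn⟩ := hpow f
  rw [hn, spow_of_isIdempotentElem hf]

theorem mul_mul_self_of_isIdempotentElem (hpow : ∀ a : S, ∃ n : ℕ, ω a = spow a n)
    (hrect : ∀ s t : S, ω s = ω s * ω t * ω s)
    {f g : S} (hf : IsIdempotentElem f) (hg : IsIdempotentElem g) : f * g * f = f := by
  have h := hrect f g
  rw [omega_eq_self hpow hf, omega_eq_self hpow hg] at h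
  exact h.symm

theorem isIdempotentElem_mul_of_rect (hpow : ∀ a : S, ∃ n : ℕ, ω a = spow a n)
    (hrect : ∀ s t : S, ω s = ω s * ω t * ω s)
    {f g : S} (hf : IsIdempotentElem f) (hg : IsIdempotentElem g) :
    IsIdempotentElem (f * g) := by
  calc f * g * (f * g) = f * g * f * g := by simp only [mul_assoc]
    _ = f * g := by rw [mul_mul_self_of_isIdempotentElem hpow hrect hf hg]

theorem mul_mul_eq_mul_of_isIdempotentElem (hpow : ∀ a : S, ∃ n : ℕ, ω a = spow a n)
    (hrect : ∀ s t : S, ω s = ω s * ω t * ω s)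
    {f g h : S} (hf : IsIdempotentElem f) (hg : IsIdempotentElem g) (hh : IsIdempotentElem h) :
    f * g * h = f * h := by
  have hgh := isIdempotentElem_mul_of_rect hpow hrect hg hh
  symm
  calc f * h = f * (g * h) * f * h := by rw [mul_mul_self_of_isIdempotentElem hpow hrect hf hgh]
    _ = f * g * (h * f * h) := by simp only [mul_assoc]
    _ = f * g * h := by rw [mul_mul_self_of_isIdempotentElem hpow hrect hh hf]

theorem mul_idempotent_mul_eq (hpow : ∀ a : S, ∃ n : ℕ, ω a = spow a n)
    (hidem : ∀ a : S, ω a * ω a = ω a)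
    (hcr_left : ∀ a : S, ω a * a = a) (hcr_right : ∀ a : S, a * ω a = a)
    (hrect : ∀ s t : S, ω s = ω s * ω t * ω s)
    {e : S} (he : IsIdempotentElem e) (y z : S) : y * e * z = y * z := by
  calc y * e * z = y * ω y * e * (ω z * z) := by rw [hcr_right, hcr_left]
    _ = y * (ω y * e * ω z) * z := by simp only [mul_assoc]
    _ = y * (ω y * ω z) * z := by
        rw [mul_mul_eq_mul_of_isIdempotentElem hpow hrect (hidem y) he (hidem z)]
    _ = y * ω y * (ω z * z) := by simp only [mul_assoc]
    _ = y * z := by rw [hcr_right, hcr_left]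

theorem omega_eq_of_mul_eq_of_mul_eq (hpow : ∀ a : S, ∃ n : ℕ, ω a = spow a n)
    (hrect : ∀ s t : S, ω s = ω s * ω t * ω s)
    {u a : S} (hu : IsIdempotentElem u) (hl : u * a = a) (hr : a * u = a) : ω a = u := by
  obtain ⟨n, hn⟩ := hpow a
  have hrect_ua := hrect u a
  rw [omega_eq_self hpow hu] at hrect_ua
  rw [hrect_ua, mul_assoc, hn, spow_mul_of_mul_eq hr, mul_spow_of_mul_eq hl]

theorem omega_mul_mul_of_isIdempotentElem (hpow : ∀ a : S, ∃ n : ℕ, ω a = spow a n)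
    (hrect : ∀ s t : S, ω s = ω s * ω t * ω s)
    {e : S} (he : IsIdempotentElem e) (s : S) : ω (e * s * e) = e :=
  omega_eq_of_mul_eq_of_mul_eq hpow hrect he
    (by rw [← mul_assoc, ← mul_assoc, he.eq]) (by rw [mul_assoc, he.eq])

theorem omega_mul (hpow : ∀ a : S, ∃ n : ℕ, ω a = spow a n)
    (hidem : ∀ a : S, ω a * ω a = ω a)
    (hcr_left : ∀ a : S, ω a * a = a) (hcr_right : ∀ a : S, a * ω a = a)
    (hrect : ∀ s t : S, ω s = ω s * ω t * ω s) (s t : S) : ω (s * t) = ω s * ω t := by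
  have hdel : ∀ {u : S}, IsIdempotentElem u → ∀ y z : S, y * u * z = y * z :=
    mul_idempotent_mul_eq hpow hidem hcr_left hcr_right hrect
  refine omega_eq_of_mul_eq_of_mul_eq hpow hrect
    (isIdempotentElem_mul_of_rect hpow hrect (hidem s) (hidem t)) ?_ ?_
  · rw [hdel (hidem t), ← mul_assoc, hcr_left]
  · rw [← mul_assoc, hdel (hidem s), mul_assoc, hcr_right]

theorem mul_mul_mul_distrib_of_isIdempotentElem (hpow : ∀ a : S, ∃ n : ℕ, ω a = spow a n)
    (hidem : ∀ a : S, ω a * ω a = ω a)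
    (hcr_left : ∀ a : S, ω a * a = a) (hcr_right : ∀ a : S, a * ω a = a)
    (hrect : ∀ s t : S, ω s = ω s * ω t * ω s)
    {e : S} (he : IsIdempotentElem e) (s t : S) :
    e * (s * t) * e = e * s * e * (e * t * e) := by
  have hdel := mul_idempotent_mul_eq hpow hidem hcr_left hcr_right hrect he
  calc e * (s * t) * e = e * s * (t * e) := by simp only [mul_assoc]
    _ = e * s * e * (e * t * e) := by
        rw [← hdel, ← hdel (e * s * e)]; simp only [mul_assoc]

theorem omega_mul_mul_mul_omega (hpow : ∀ a : S, ∃ n : ℕ, ω a = spow a n)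
    (hidem : ∀ a : S, ω a * ω a = ω a)
    (hcr_left : ∀ a : S, ω a * a = a) (hcr_right : ∀ a : S, a * ω a = a)
    (hrect : ∀ s t : S, ω s = ω s * ω t * ω s)
    {e : S} (he : IsIdempotentElem e) (s : S) : ω s * (e * s * e) * ω s = s := by
  have hdel := mul_idempotent_mul_eq hpow hidem hcr_left hcr_right hrect he
  calc ω s * (e * s * e) * ω s = ω s * e * (s * e * ω s) := by simp only [mul_assoc]
    _ = s := by rw [hdel, hdel, hcr_right, hcr_left]

end

theorem rectangular_group_decomposition_general
    {S : Type*} [Semigroup S] (ω : S → S)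
    (hpow : ∀ a : S, ∃ n : ℕ, ω a = spow a n)
    (hidem : ∀ a : S, ω a * ω a = ω a)
    (hcr_left : ∀ a : S, ω a * a = a)
    (hcr_right : ∀ a : S, a * ω a = a)
    (hrect : ∀ s t : S, ω s = ω s * ω t * ω s)
    (e : S) (he : e * e = e) :
    (∀ s : S, ω (e * s * e) = e) ∧
    (∀ s t : S, e * (s * t) * e = (e * s * e) * (e * t * e)) ∧
    (∀ s t : S, ω (s * t) = ω s * ω t) ∧
    (∀ s t : S, ω s = ω t → e * s * e = e * t * e → s = t) := by
  have hrecover := omega_mul_mul_mul_omega hpow hidem hcr_left hcr_right hrect he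
  refine ⟨omega_mul_mul_of_isIdempotentElem hpow hrect he,
    mul_mul_mul_distrib_of_isIdempotentElem hpow hidem hcr_left hcr_right hrect he,
    omega_mul hpow hidem hcr_left hcr_right hrect, fun s t hω hψ => ?_⟩
  rw [← hrecover s, ← hrecover t, hω, hψ]

/-- For a finite normal orthogroup whose idempotents form a rectangular band
(x^ω = x^ω y^ω x^ω) and an idempotent e, the map ψ(s) = ese is a homomorphism of S into
the maximal subgroup H_e = {s | s^ω = e}, and α(s) = (s^ω, ese) is an injective
homomorphism into E(S) × H_e. -/
theorem rectangular_group_decomposition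
    {S : Type*} [Semigroup S] [Fintype S] (ω : S → S)
    (hpow : ∀ a : S, ∃ n : ℕ, ω a = spow a n)
    (hidem : ∀ a : S, ω a * ω a = ω a)
    (hcr_left : ∀ a : S, ω a * a = a)
    (hcr_right : ∀ a : S, a * ω a = a)
    (horthodox : ∀ e f : S, e * e = e → f * f = f → (e * f) * (e * f) = e * f)
    (hnormal : ∀ e f g : S, e * e = e → f * f = f → g * g = g →
      e * f * e * g * e = e * g * e * f * e)
    (hrect : ∀ s t : S, ω s = ω s * ω t * ω s)
    (e : S) (he : e * e = e) :
    (∀ s : S, ω (e * s * e) = e) ∧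
    (∀ s t : S, e * (s * t) * e = (e * s * e) * (e * t * e)) ∧
    (∀ s t : S, ω (s * t) = ω s * ω t) ∧
    (∀ s t : S, ω s = ω t → e * s * e = e * t * e → s = t) :=
  rectangular_group_decomposition_general ω hpow hidem hcr_left hcr_right hrect e he
end

section
/- Let T be a finite semigroup, G a finite group, and β : T → G a surjective semigroup homomorphism. Then there is a subgroup H of T (a subsemigroup of T that is a group) such that β(H) = G. -/
/-!
Among the subsemigroups of `T` that `β` maps onto `G`, take a minimal one `S`. For `s ∈ S`,
the translates `s * S` and `S * s` are again such subsemigroups (their images are the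
translates of `G` by `β s`) and lie inside `S`, so they equal `S`. Hence every equation
`a * x = b`, `y * a = b` with `a b ∈ S` is solvable in `S`, and a nonempty semigroup with
this property is a group.
-/

section DivisibleSemigroup

variable {T : Type*} [Semigroup T] {S : Set T}

theorem exists_two_sided_identity_of_divisible (hne : S.Nonempty)
    (hl : ∀ a ∈ S, ∀ b ∈ S, ∃ x ∈ S, a * x = b) (hr : ∀ a ∈ S, ∀ b ∈ S, ∃ y ∈ S, y * a = b) :
    ∃ e ∈ S, ∀ a ∈ S, e * a = a ∧ a * e = a := by
  obtain ⟨s, hs⟩ := hne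
  obtain ⟨e, he, hse⟩ := hl s hs s hs
  obtain ⟨f, hf, hfs⟩ := hr s hs s hs
  have right_id : ∀ a ∈ S, a * e = a := by
    intro a ha
    obtain ⟨u, -, rfl⟩ := hr s hs a ha
    rw [mul_assoc, hse]
  have left_id : ∀ a ∈ S, f * a = a := by
    intro a ha
    obtain ⟨v, -, rfl⟩ := hl s hs a ha
    rw [← mul_assoc, hfs]
  have hfe : f = e := (right_id f hf).symm.trans (left_id e he)
  exact ⟨e, he, fun a ha => ⟨hfe ▸ left_id a ha, right_id a ha⟩⟩

theorem exists_two_sided_inverse_of_divisible {e : T} (he : e ∈ S)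
    (hid : ∀ a ∈ S, e * a = a ∧ a * e = a)
    (hl : ∀ a ∈ S, ∀ b ∈ S, ∃ x ∈ S, a * x = b) (hr : ∀ a ∈ S, ∀ b ∈ S, ∃ y ∈ S, y * a = b)
    {a : T} (ha : a ∈ S) : ∃ b ∈ S, a * b = e ∧ b * a = e := by
  obtain ⟨b, hb, hab⟩ := hl a ha e he
  obtain ⟨c, hc, hca⟩ := hr a ha e he
  have hcb : c = b := by
    calc c = c * (a * b) := by rw [hab, (hid c hc).2]
      _ = b := by rw [← mul_assoc, hca, (hid b hb).1]
  exact ⟨b, hb, hab, hcb ▸ hca⟩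

end DivisibleSemigroup

section SubsemigroupOnto

variable {T G : Type*} [Semigroup T] [Group G] (β : T →ₙ* G)

def IsSubsemigroupOnto (S : Set T) : Prop :=
  (∀ a ∈ S, ∀ b ∈ S, a * b ∈ S) ∧ β '' S = Set.univ

variable {β} {S : Set T} {s : T}

theorem IsSubsemigroupOnto.image_mul_left (hS : IsSubsemigroupOnto β S) (hs : s ∈ S) :
    IsSubsemigroupOnto β ((s * ·) '' S) := by
  refine ⟨?_, Set.eq_univ_of_forall fun g => ?_⟩
  · rintro _ ⟨a, ha, rfl⟩ _ ⟨b, hb, rfl⟩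
    exact ⟨a * (s * b), hS.1 a ha _ (hS.1 s hs b hb), by simp only [mul_assoc]⟩
  · obtain ⟨t, ht, hβt⟩ := hS.2.symm ▸ Set.mem_univ ((β s)⁻¹ * g)
    exact ⟨s * t, ⟨t, ht, rfl⟩, by rw [map_mul, hβt, mul_inv_cancel_left]⟩

theorem IsSubsemigroupOnto.image_mul_right (hS : IsSubsemigroupOnto β S) (hs : s ∈ S) :
    IsSubsemigroupOnto β ((· * s) '' S) := by
  refine ⟨?_, Set.eq_univ_of_forall fun g => ?_⟩
  · rintro _ ⟨a, ha, rfl⟩ _ ⟨b, hb, rfl⟩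
    exact ⟨a * s * b, hS.1 _ (hS.1 a ha s hs) b hb, by simp only [mul_assoc]⟩
  · obtain ⟨t, ht, hβt⟩ := hS.2.symm ▸ Set.mem_univ (g * (β s)⁻¹)
    exact ⟨t * s, ⟨t, ht, rfl⟩, by rw [map_mul, hβt, inv_mul_cancel_right]⟩

theorem Minimal.exists_right_factor (hS : Minimal (IsSubsemigroupOnto β) S) :
    ∀ a ∈ S, ∀ b ∈ S, ∃ x ∈ S, a * x = b := by
  intro a ha b hb
  have hsub : (a * ·) '' S ⊆ S := by
    rintro _ ⟨x, hx, rfl⟩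
    exact hS.prop.1 a ha x hx
  rwa [← hS.eq_of_subset (hS.prop.image_mul_left ha) hsub] at hb

theorem Minimal.exists_left_factor (hS : Minimal (IsSubsemigroupOnto β) S) :
    ∀ a ∈ S, ∀ b ∈ S, ∃ y ∈ S, y * a = b := by
  intro a ha b hb
  have hsub : (· * a) '' S ⊆ S := by
    rintro _ ⟨y, hy, rfl⟩
    exact hS.prop.1 y hy a ha
  rwa [← hS.eq_of_subset (hS.prop.image_mul_right ha) hsub] at hb

end SubsemigroupOnto

theorem surjective_onto_group_restricts_to_subgroup_general
    {T : Type*} [Semigroup T] [Fintype T]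
    {G : Type*} [Group G]
    (β : T → G) (hmul : ∀ s t : T, β (s * t) = β s * β t)
    (hsurj : Function.Surjective β) :
    ∃ H : Set T,
      (∀ a ∈ H, ∀ b ∈ H, a * b ∈ H) ∧
      (∃ e ∈ H, (∀ a ∈ H, e * a = a ∧ a * e = a) ∧
        (∀ a ∈ H, ∃ b ∈ H, a * b = e ∧ b * a = e)) ∧
      β '' H = Set.univ := by
  let β' : T →ₙ* G := ⟨β, hmul⟩
  have huniv : IsSubsemigroupOnto β' Set.univ :=
    ⟨fun _ _ _ _ => Set.mem_univ _, Set.image_univ_of_surjective hsurj⟩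
  obtain ⟨S, -, hS⟩ := exists_minimal_le_of_wellFoundedLT _ _ huniv
  have hl := hS.exists_right_factor
  have hr := hS.exists_left_factor
  have hne : S.Nonempty := Set.image_nonempty.mp (hS.prop.2 ▸ Set.univ_nonempty)
  obtain ⟨e, he, hid⟩ := exists_two_sided_identity_of_divisible hne hl hr
  exact ⟨S, hS.prop.1,
    ⟨e, he, hid, fun a ha => exists_two_sided_inverse_of_divisible he hid hl hr ha⟩, hS.prop.2⟩

/-- For a surjective semigroup homomorphism β from a finite semigroup T onto a finite
group G, there is a subgroup H of T (a subsemigroup that is a group under the induced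
multiplication) with β(H) = G. -/
theorem surjective_onto_group_restricts_to_subgroup
    {T : Type*} [Semigroup T] [Fintype T]
    {G : Type*} [Group G] [Fintype G]
    (β : T → G) (hmul : ∀ s t : T, β (s * t) = β s * β t)
    (hsurj : Function.Surjective β) :
    ∃ H : Set T,
      (∀ a ∈ H, ∀ b ∈ H, a * b ∈ H) ∧
      (∃ e ∈ H, (∀ a ∈ H, e * a = a ∧ a * e = a) ∧
        (∀ a ∈ H, ∃ b ∈ H, a * b = e ∧ b * a = e)) ∧
      β '' H = Set.univ :=
  surjective_onto_group_restricts_to_subgroup_general β hmul hsurj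
end

section
/- Let S be a finite ordered semigroup which is a commutative band satisfying x ≤ xy for all x, y. If S is nontrivial, then S contains an ordered subsemigroup isomorphic to U⁺ = {1, ⊤} where 1·1 = 1, 1·⊤ = ⊤·1 = ⊤·⊤ = ⊤, and 1 < ⊤. -/
/-- A nontrivial finite ordered commutative band satisfying x ≤ xy contains an ordered
subsemigroup isomorphic to U⁺ = {1,⊤} (with ⊤ a multiplicative zero and 1 < ⊤): there
are distinct elements a ≤ b with a·b = b·a = b (and both idempotent, automatically). -/
theorem nontrivial_plus_ordered_semilattice_contains_Uplus
    {S : Type*} [Semigroup S] [Fintype S] [PartialOrder S]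
    (hle_left : ∀ a b c : S, a ≤ b → c * a ≤ c * b)
    (hle_right : ∀ a b c : S, a ≤ b → a * c ≤ b * c)
    (hband : ∀ x : S, x * x = x)
    (hcomm : ∀ x y : S, x * y = y * x)
    (hplus : ∀ x y : S, x ≤ x * y)
    (hnontrivial : ∃ x y : S, x ≠ y) :
    ∃ a b : S, a ≠ b ∧ a ≤ b ∧ a * b = b ∧ b * a = b ∧ a * a = a ∧ b * b = b := by
  obtain ⟨x, y, hxy⟩ := hnontrivial
  by_cases h : x = x * y
  · refine ⟨y, y * x, ?_, hplus y x, ?_, ?_, hband y, ?_⟩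
    · intro hy
      exact hxy (by rw [h, hcomm, ← hy])
    · rw [← mul_assoc, hband]
    · rw [mul_assoc, hcomm x y, ← mul_assoc, hband]
    · exact hband _
  · exact ⟨x, x * y, h, hplus x y, by rw [← mul_assoc, hband],
      by rw [mul_assoc, hcomm y x, ← mul_assoc, hband], hband x,
      by rw [mul_assoc, ← mul_assoc y, hcomm y x, mul_assoc, hband, ← mul_assoc, hband]⟩
end
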